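/- Let w be a positive natural number and let m satisfy 2^{w−1} < m < 2^w. If J is uniformly distributed on {0, 1, …, 2^w − 1} and Y = 1 + ⌊m·J/2^w⌋, then max_{1 ≤ k ≤ m} P(Y = k) = 2 · min_{1 ≤ k ≤ m} P(Y = k): some values in {1, …, m} are exactly twice as likely as others. -/

import Mathlib

/-!
The output `1 + ⌊m j / N⌋` equals `t + 1` exactly when `t N ≤ m j < (t + 1) N`, i.e. for the `j`
in `[⌈t N / m⌉, ⌈(t + 1) N / m⌉)`, an interval whose length lies between `⌊N / m⌋` and
`⌈N / m⌉`. For `N = 2 ^ w` and `N / 2 < m < N` these bounds are `1` and `2`, and since the `m`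
lengths add up to `N` with `m < N < 2 m`, both bounds are attained.
-/

/-- The probability that the multiply-and-floor method outputs `k`, when `J` is uniformly
distributed on `{0, 1, …, 2^w − 1}` and `Y = 1 + ⌊m·J/2^w⌋`:
`P(Y = k) = #{j < 2^w | 1 + ⌊m·j/2^w⌋ = k} / 2^w`. -/
def floorMulProb (w m k : ℕ) : ℚ :=
  (((Finset.range (2 ^ w)).filter (fun j => 1 + m * j / 2 ^ w = k)).card : ℚ) / 2 ^ w

open Finset

def floorMulFiber (N m k : ℕ) : Finset ℕ := {j ∈ range N | 1 + m * j / N = k}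

lemma floorMulProb_eq (w m k : ℕ) :
    floorMulProb w m k = #(floorMulFiber (2 ^ w) m k) / 2 ^ w := by
  simp [floorMulProb, floorMulFiber]

namespace Nat

lemma ceilDiv_add_le (a b m : ℕ) : (a + b) ⌈/⌉ m ≤ a ⌈/⌉ m + b ⌈/⌉ m := by
  rcases m.eq_zero_or_pos with rfl | hm
  · simp
  rw [ceilDiv_le_iff_le_mul hm, mul_add]
  exact add_le_add (le_smul_ceilDiv hm) (le_smul_ceilDiv hm)

lemma ceilDiv_add_div_le (a b m : ℕ) : a ⌈/⌉ m + b / m ≤ (a + b) ⌈/⌉ m := by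
  rcases m.eq_zero_or_pos with rfl | hm
  · simp
  simp only [ceilDiv_eq_add_pred_div]
  calc (a + m - 1) / m + b / m ≤ (a + m - 1 + b) / m := Nat.div_add_div_le_add_div
    _ ≤ (a + b + m - 1) / m := Nat.div_le_div_right (by omega)

lemma lt_ceilDiv_iff_mul_lt {a b m : ℕ} (hm : 0 < m) : a < b ⌈/⌉ m ↔ m * a < b := by
  simpa only [not_le] using (ceilDiv_le_iff_le_mul hm).not

end Nat

section FloorMulFiber

variable {N m k : ℕ}

lemma floorMulFiber_succ_eq_Ico (hN : 0 < N) (hm : 0 < m) {t : ℕ} (ht : t < m) :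
    floorMulFiber N m (t + 1) = Ico (t * N ⌈/⌉ m) ((t + 1) * N ⌈/⌉ m) := by
  ext j
  simp only [floorMulFiber, mem_filter, mem_range, mem_Ico, ceilDiv_le_iff_le_mul hm,
    Nat.lt_ceilDiv_iff_mul_lt hm, Nat.add_comm 1, Nat.add_right_cancel_iff, Nat.div_eq_iff hN,
    Nat.succ_mul]
  have : t * N + N ≤ m * N := Nat.succ_mul t N ▸ Nat.mul_le_mul_right N ht
  have : m * j < m * N → j < N := Nat.lt_of_mul_lt_mul_left
  omega

lemma card_floorMulFiber_mem_Icc (hN : 0 < N) (hk : k ∈ Icc 1 m) :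
    #(floorMulFiber N m k) ∈ Icc (N / m) (N ⌈/⌉ m) := by
  obtain ⟨hk1, hkm⟩ := mem_Icc.1 hk
  obtain ⟨t, rfl⟩ := Nat.exists_eq_add_of_le' hk1
  rw [floorMulFiber_succ_eq_Ico hN (by omega) (by omega), Nat.card_Ico, Nat.add_mul, Nat.one_mul,
    mem_Icc]
  have := Nat.ceilDiv_add_le (t * N) N m
  have := Nat.ceilDiv_add_div_le (t * N) N m
  omega

lemma sum_card_floorMulFiber (hm : 0 < m) : ∑ k ∈ Icc 1 m, #(floorMulFiber N m k) = N := by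
  refine (card_eq_sum_card_fiberwise fun j hj => ?_).symm.trans (card_range N)
  have hj : j < N := by simpa using hj
  have : m * j / N < m := (Nat.div_lt_iff_lt_mul (by omega)).2 (Nat.mul_lt_mul_of_pos_left hj hm)
  exact mem_Icc.2 ⟨Nat.le_add_right 1 _, Nat.one_add_le_iff.2 this⟩

end FloorMulFiber

section TopHalf

variable {N m : ℕ}

lemma card_floorMulFiber_mem_Icc_one_two (hmN : m < N) (hN : N < 2 * m) {k : ℕ}
    (hk : k ∈ Icc 1 m) : #(floorMulFiber N m k) ∈ Icc 1 2 := by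
  have hdiv : N / m = 1 := Nat.div_eq_of_lt_le (by omega) (by omega)
  have hceilDiv : N ⌈/⌉ m = 2 := by
    rw [Nat.ceilDiv_eq_add_pred_div]; exact Nat.div_eq_of_lt_le (by omega) (by omega)
  simpa only [hdiv, hceilDiv] using card_floorMulFiber_mem_Icc (Nat.zero_lt_of_lt hmN) hk

lemma exists_card_floorMulFiber_eq_two (hmN : m < N) (hN : N < 2 * m) :
    ∃ k ∈ Icc 1 m, #(floorMulFiber N m k) = 2 := by
  have hsum := sum_card_floorMulFiber (N := N) (m := m) (by omega)
  obtain ⟨k, hk, hlt⟩ := exists_lt_of_sum_lt (f := fun _ ↦ 1) <| by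
    rwa [hsum, sum_const, Nat.card_Icc, smul_eq_mul, mul_one, Nat.add_sub_cancel]
  exact ⟨k, hk, by grind [card_floorMulFiber_mem_Icc_one_two hmN hN hk]⟩

lemma exists_card_floorMulFiber_eq_one (hmN : m < N) (hN : N < 2 * m) :
    ∃ k ∈ Icc 1 m, #(floorMulFiber N m k) = 1 := by
  have hsum := sum_card_floorMulFiber (N := N) (m := m) (by omega)
  obtain ⟨k, hk, hlt⟩ := exists_lt_of_sum_lt (g := fun _ ↦ 2) <| by
    rwa [hsum, sum_const, Nat.card_Icc, smul_eq_mul, Nat.add_sub_cancel, mul_comm]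
  exact ⟨k, hk, by grind [card_floorMulFiber_mem_Icc_one_two hmN hN hk]⟩

end TopHalf

theorem floorMul_ratio_two_of_top_half_general (w m : ℕ)
    (hm1 : 2 ^ (w - 1) < m) (hm2 : m < 2 ^ w) (hm : 1 ≤ m) :
    (Finset.Icc 1 m).sup' (Finset.nonempty_Icc.mpr hm) (floorMulProb w m)
        = 2 * (Finset.Icc 1 m).inf' (Finset.nonempty_Icc.mpr hm) (floorMulProb w m) ∧
      ∃ k₁ ∈ Finset.Icc 1 m, ∃ k₂ ∈ Finset.Icc 1 m,
        floorMulProb w m k₁ = 2 * floorMulProb w m k₂ := by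
  have hN : 2 ^ w < 2 * m := calc
    2 ^ w ≤ 2 ^ (w - 1 + 1) := Nat.pow_le_pow_right two_pos (by omega)
    _ < 2 * m := by rw [pow_succ']; omega
  have hcard (k : ℕ) (hk : k ∈ Icc 1 m) :=
    mem_Icc.1 (card_floorMulFiber_mem_Icc_one_two hm2 hN hk)
  obtain ⟨k₁, hk₁, h₁⟩ := exists_card_floorMulFiber_eq_two hm2 hN
  obtain ⟨k₂, hk₂, h₂⟩ := exists_card_floorMulFiber_eq_one hm2 hN
  have hsup : (Icc 1 m).sup' (nonempty_Icc.mpr hm) (floorMulProb w m) = 2 / 2 ^ w :=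
    le_antisymm
      (sup'_le _ _ fun k hk ↦ by rw [floorMulProb_eq]; gcongr; exact_mod_cast (hcard k hk).2)
      (le_sup'_of_le _ hk₁ (by rw [floorMulProb_eq, h₁]; norm_num))
  have hinf : (Icc 1 m).inf' (nonempty_Icc.mpr hm) (floorMulProb w m) = 1 / 2 ^ w :=
    le_antisymm
      (inf'_le_of_le _ hk₂ (by rw [floorMulProb_eq, h₂]; norm_num))
      (le_inf' _ _ fun k hk ↦ by rw [floorMulProb_eq]; gcongr; exact_mod_cast (hcard k hk).1)
  refine ⟨by rw [hsup, hinf]; ring, k₁, hk₁, k₂, hk₂, ?_⟩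
  rw [floorMulProb_eq, floorMulProb_eq, h₁, h₂]
  push_cast
  ring

/-- if `2^{w−1} < m < 2^w`, then
`max_{1 ≤ k ≤ m} P(Y = k) = 2 · min_{1 ≤ k ≤ m} P(Y = k)`: some values in `{1, …, m}`
are exactly twice as likely as others. -/
theorem floorMul_ratio_two_of_top_half (w m : ℕ) (hw : 0 < w)
    (hm1 : 2 ^ (w - 1) < m) (hm2 : m < 2 ^ w) (hm : 1 ≤ m) :
    (Finset.Icc 1 m).sup' (Finset.nonempty_Icc.mpr hm) (floorMulProb w m)
        = 2 * (Finset.Icc 1 m).inf' (Finset.nonempty_Icc.mpr hm) (floorMulProb w m) ∧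
      ∃ k₁ ∈ Finset.Icc 1 m, ∃ k₂ ∈ Finset.Icc 1 m,
        floorMulProb w m k₁ = 2 * floorMulProb w m k₂ :=
  floorMul_ratio_two_of_top_half_general w m hm1 hm2 hm
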